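/- arXiv:2411.00065 — 8 statements merged into one kernel-verified Lean document; each statement's English description precedes it below -/
import Mathlib

section
/- Let m₀ ≤ M₀ be real numbers, let f : ℝ → ℝ be differentiable, and let α > 0 satisfy |f'(u)| ≤ α for every u ∈ [m₀, M₀]. Then for all u_L, u_R ∈ [m₀, M₀], the local Lax–Friedrichs intermediate state ũ = ½(u_L + u_R) + (f(u_L) − f(u_R))/(2α) satisfies m₀ ≤ ũ ≤ M₀. -/
theorem llf_intermediate_state_maximum_principle
    (m₀ M₀ : ℝ) (hmM : m₀ ≤ M₀) (f : ℝ → ℝ) (hf : Differentiable ℝ f)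
    (α : ℝ) (hα : 0 < α) (hbound : ∀ u ∈ Set.Icc m₀ M₀, |deriv f u| ≤ α)
    (uL uR : ℝ) (hL : uL ∈ Set.Icc m₀ M₀) (hR : uR ∈ Set.Icc m₀ M₀) :
    (uL + uR) / 2 + (f uL - f uR) / (2 * α) ∈ Set.Icc m₀ M₀ := by
  have key : |f uL - f uR| ≤ α * |uL - uR| := by
    have := (convex_Icc m₀ M₀).norm_image_sub_le_of_norm_hasDerivWithin_le
      (f := f) (f' := deriv f) (C := α)
      (fun x _ => (hf x).hasDerivAt.hasDerivWithinAt)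
      (fun x hx => by simpa [Real.norm_eq_abs] using hbound x hx) hR hL
    simpa [Real.norm_eq_abs, abs_sub_comm] using this
  have habs := abs_le.1 key
  have hmin : min uL uR ≥ m₀ := le_min hL.1 hR.1
  have hmax : max uL uR ≤ M₀ := max_le hL.2 hR.2
  constructor
  · have h1 : (uL + uR) / 2 - |uL - uR| / 2 = min uL uR := by
      rcases le_total uL uR with h | h
      · rw [abs_of_nonpos (by linarith), min_eq_left h]; ring
      · rw [abs_of_nonneg (by linarith), min_eq_right h]; ring
    have h2 : (f uL - f uR) / (2 * α) ≥ -(|uL - uR| / 2) := by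
      rw [ge_iff_le, neg_le, ← neg_div, div_le_iff₀ (by positivity)]
      nlinarith [habs.1, hα]
    nlinarith [h1, h2, hmin]
  · have h1 : (uL + uR) / 2 + |uL - uR| / 2 = max uL uR := by
      rcases le_total uL uR with h | h
      · rw [abs_of_nonpos (by linarith), max_eq_right h]; ring
      · rw [abs_of_nonneg (by linarith), max_eq_left h]; ring
    have h2 : (f uL - f uR) / (2 * α) ≤ |uL - uR| / 2 := by
      rw [div_le_iff₀ (by positivity)]
      nlinarith [habs.2, hα]
    nlinarith [h1, h2, hmax]
end

section
/- Fix γ > 1. Let U_L = (ρ_L, m₁ᴸ, m₂ᴸ, E_L) and U_R = (ρ_R, m₁ᴿ, m₂ᴿ, E_R) be two 2D Euler states in the admissible set G, and let α be a real number with α ≥ max{|v₁(U_L)| + a(U_L), |v₁(U_R)| + a(U_R)}, where v₁(U) = m₁/ρ and a(U) = √(γp(U)/ρ). Then the intermediate state Ũ = ½(U_L + U_R) + (F₁(U_L) − F₁(U_R))/(2α) belongs to G, i.e. its density is positive and its pressure p(Ũ) is positive. -/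
/-- Pressure of a 2D Euler state `U = (ρ, m₁, m₂, E)` with adiabatic index `γ`. -/
noncomputable def eulerPressure2D (γ : ℝ) (U : Fin 4 → ℝ) : ℝ :=
  (γ - 1) * (U 3 - (U 1 ^ 2 + U 2 ^ 2) / (2 * U 0))

/-- Sound speed of a 2D Euler state. -/
noncomputable def eulerSound2D (γ : ℝ) (U : Fin 4 → ℝ) : ℝ :=
  Real.sqrt (γ * eulerPressure2D γ U / U 0)

/-- x-directional flux of the 2D Euler equations. -/
noncomputable def eulerFlux2D (γ : ℝ) (U : Fin 4 → ℝ) : Fin 4 → ℝ :=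
  ![U 1, U 1 ^ 2 / U 0 + eulerPressure2D γ U, U 1 * U 2 / U 0,
    (U 3 + eulerPressure2D γ U) * U 1 / U 0]

/-- Admissible state set of the 2D Euler equations. -/
def eulerAdm2D (γ : ℝ) : Set (Fin 4 → ℝ) :=
  {U | 0 < U 0 ∧ 0 < eulerPressure2D γ U}

/-- Convexity: the midpoint of two states with positive density and positive
internal energy again has positive internal energy. -/
lemma llf_mid (ρa ma na Ea ρb mb nb Eb : ℝ) (hρa : 0 < ρa) (hρb : 0 < ρb)
    (ha : 0 < Ea - (ma^2 + na^2)/(2*ρa)) (hb : 0 < Eb - (mb^2 + nb^2)/(2*ρb)) :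
    0 < (Ea + Eb)/2 - (((ma+mb)/2)^2 + ((na+nb)/2)^2) / (2*((ρa+ρb)/2)) := by
  have h1 : ma^2 + na^2 < 2*ρa*Ea := by
    have := (div_lt_iff₀ (by positivity)).mp (sub_pos.mp ha)
    nlinarith [this]
  have h2 : mb^2 + nb^2 < 2*ρb*Eb := by
    have := (div_lt_iff₀ (by positivity)).mp (sub_pos.mp hb)
    nlinarith [this]
  rw [sub_pos, div_lt_iff₀ (by positivity)]
  nlinarith [sq_nonneg (ma*ρb - mb*ρa), sq_nonneg (na*ρb - nb*ρa), mul_pos hρa hρb,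
    mul_pos (mul_pos hρa hρb) hρb, mul_lt_mul_of_pos_left h1 hρb, mul_lt_mul_of_pos_left h2 hρa]

lemma llf_aux (γ ρ e κ α : ℝ) (hγ : 1 < γ) (hρ : 0 < ρ) (he : 0 < e) (hα : 0 < α)
    (h7 : γ * ((γ-1) * e) ≤ ρ * κ^2) :
    0 < 2 * ρ * e * (κ/α)^2 - (1/α)^2 * ((γ-1) * e)^2 := by
  have h8 : ((γ-1) * e)^2 < 2 * ρ * e * κ^2 := by
    nlinarith [h7, mul_pos he he, hγ, hρ]
  have h9 : 0 < (2 * ρ * e * κ^2 - ((γ-1) * e)^2) / α^2 :=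
    div_pos (by linarith) (by positivity)
  have h10 : 2 * ρ * e * (κ/α)^2 - (1/α)^2 * ((γ-1) * e)^2
      = (2 * ρ * e * κ^2 - ((γ-1) * e)^2) / α^2 := by
    field_simp
  linarith

/-- Key lemma: the states `U ± F(U)/α` are admissible when `α ≥ |v₁| + a`. -/
lemma llf_key (γ α ε ρ m1 m2 E : ℝ) (hγ : 1 < γ) (hρ : 0 < ρ)
    (hp : 0 < E - (m1^2 + m2^2)/(2*ρ))
    (hε : ε = 1 ∨ ε = -1)
    (hα : |m1/ρ| + Real.sqrt (γ * ((γ-1)*(E - (m1^2+m2^2)/(2*ρ))) / ρ) ≤ α) :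
    0 < ρ + (ε/α) * m1 ∧
    0 < (E + (ε/α) * ((E + (γ-1)*(E - (m1^2+m2^2)/(2*ρ))) * m1 / ρ))
        - ((m1 + (ε/α) * (m1^2/ρ + (γ-1)*(E - (m1^2+m2^2)/(2*ρ))))^2
           + (m2 + (ε/α) * (m1*m2/ρ))^2) / (2*(ρ + (ε/α)*m1)) := by
  have hε2 : ε^2 = 1 := by rcases hε with rfl | rfl <;> norm_num
  have hP : 0 < (γ-1)*(E - (m1^2+m2^2)/(2*ρ)) := mul_pos (by linarith) hp
  have ha2 : Real.sqrt (γ * ((γ-1)*(E - (m1^2+m2^2)/(2*ρ))) / ρ) ^ 2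
      = γ * ((γ-1)*(E - (m1^2+m2^2)/(2*ρ))) / ρ := Real.sq_sqrt (by positivity)
  have ha : 0 < Real.sqrt (γ * ((γ-1)*(E - (m1^2+m2^2)/(2*ρ))) / ρ) :=
    Real.sqrt_pos.mpr (by positivity)
  have hαpos : 0 < α :=
    lt_of_lt_of_le (lt_of_lt_of_le ha (le_add_of_nonneg_left (abs_nonneg _))) hα
  have hm : |m1| < ρ * α := by
    have habs0 : |m1 / ρ| = |m1| / ρ := by rw [abs_div, abs_of_pos hρ]
    have h1 : |m1| / ρ ≤ α - Real.sqrt (γ * ((γ-1)*(E - (m1^2+m2^2)/(2*ρ))) / ρ) := by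
      rw [← habs0]; linarith
    have := (div_le_iff₀ hρ).mp h1
    nlinarith
  have habs : |(ε/α) * m1| = |m1| / α := by
    rcases hε with rfl | rfl <;> rw [abs_mul, abs_div, abs_of_pos hαpos] <;> norm_num
      <;> ring
  have hmα : |m1| / α < ρ := by rw [div_lt_iff₀ hαpos]; linarith [hm]
  have hρ'pos : 0 < ρ + (ε/α) * m1 := by
    have := neg_abs_le ((ε/α) * m1)
    rw [habs] at this; linarith
  have hκ : Real.sqrt (γ * ((γ-1)*(E - (m1^2+m2^2)/(2*ρ))) / ρ) ≤ α + ε * (m1/ρ) := by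
    rcases hε with rfl | rfl <;>
      [nlinarith [neg_abs_le (m1/ρ), hα]; nlinarith [le_abs_self (m1/ρ), hα]]
  have hκpos : 0 < α + ε * (m1/ρ) := lt_of_lt_of_le ha hκ
  refine ⟨hρ'pos, ?_⟩
  rw [sub_pos, div_lt_iff₀ (by positivity)]
  have hid : (E + (ε/α) * ((E + (γ-1)*(E - (m1^2+m2^2)/(2*ρ))) * m1 / ρ))
        * (2*(ρ + (ε/α)*m1))
      - ((m1 + (ε/α) * (m1^2/ρ + (γ-1)*(E - (m1^2+m2^2)/(2*ρ))))^2
         + (m2 + (ε/α) * (m1*m2/ρ))^2)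
      = 2 * ρ * (E - (m1^2+m2^2)/(2*ρ)) * ((α + ε * (m1/ρ))/α)^2
        - (ε/α)^2 * ((γ-1)*(E - (m1^2+m2^2)/(2*ρ)))^2 := by
    field_simp
    ring
  have hεα : (ε/α)^2 = (1/α)^2 := by rw [div_pow, div_pow, hε2]; norm_num
  rw [hεα] at hid
  have hκ2 : Real.sqrt (γ * ((γ-1)*(E - (m1^2+m2^2)/(2*ρ))) / ρ) ^ 2
      ≤ (α + ε * (m1/ρ))^2 := pow_le_pow_left₀ ha.le hκ 2
  rw [ha2] at hκ2
  have h7 : γ * ((γ-1)*(E - (m1^2+m2^2)/(2*ρ))) ≤ ρ * (α + ε * (m1/ρ))^2 := by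
    rw [div_le_iff₀ hρ] at hκ2; linarith
  have hQ := llf_aux γ ρ (E - (m1^2+m2^2)/(2*ρ)) (α + ε * (m1/ρ)) α hγ hρ hp hαpos h7
  linarith

theorem llf_intermediate_state_euler2D_admissible
    (γ : ℝ) (hγ : 1 < γ) (UL UR : Fin 4 → ℝ)
    (hL : UL ∈ eulerAdm2D γ) (hR : UR ∈ eulerAdm2D γ) (α : ℝ)
    (hα : max (|UL 1 / UL 0| + eulerSound2D γ UL)
              (|UR 1 / UR 0| + eulerSound2D γ UR) ≤ α) :
    (2⁻¹ : ℝ) • (UL + UR) + (2 * α)⁻¹ • (eulerFlux2D γ UL - eulerFlux2D γ UR)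
      ∈ eulerAdm2D γ := by
  obtain ⟨hρL, hpL⟩ := hL
  obtain ⟨hρR, hpR⟩ := hR
  rw [eulerPressure2D] at hpL hpR
  have hXL : 0 < UL 3 - (UL 1^2 + UL 2^2)/(2*UL 0) := by
    have h : UL 3 - (UL 1^2 + UL 2^2)/(2*UL 0)
        = ((γ-1) * (UL 3 - (UL 1^2 + UL 2^2)/(2*UL 0))) / (γ-1) := by
      field_simp [sub_ne_zero.mpr hγ.ne']
    rw [h]; exact div_pos hpL (by linarith)
  have hXR : 0 < UR 3 - (UR 1^2 + UR 2^2)/(2*UR 0) := by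
    have h : UR 3 - (UR 1^2 + UR 2^2)/(2*UR 0)
        = ((γ-1) * (UR 3 - (UR 1^2 + UR 2^2)/(2*UR 0))) / (γ-1) := by
      field_simp [sub_ne_zero.mpr hγ.ne']
    rw [h]; exact div_pos hpR (by linarith)
  have hαL : |UL 1/UL 0| + Real.sqrt (γ * ((γ-1)*(UL 3 - (UL 1^2+UL 2^2)/(2*UL 0))) / UL 0)
      ≤ α := by
    have := le_trans (le_max_left _ _) hα
    rwa [eulerSound2D, eulerPressure2D] at this
  have hαR : |UR 1/UR 0| + Real.sqrt (γ * ((γ-1)*(UR 3 - (UR 1^2+UR 2^2)/(2*UR 0))) / UR 0)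
      ≤ α := by
    have := le_trans (le_max_right _ _) hα
    rwa [eulerSound2D, eulerPressure2D] at this
  have KL := llf_key γ α 1 (UL 0) (UL 1) (UL 2) (UL 3) hγ hρL hXL (Or.inl rfl) hαL
  have KR := llf_key γ α (-1) (UR 0) (UR 1) (UR 2) (UR 3) hγ hρR hXR (Or.inr rfl) hαR
  constructor
  · show 0 < 2⁻¹ * (UL 0 + UR 0) + (2 * α)⁻¹ * ((eulerFlux2D γ UL) 0 - (eulerFlux2D γ UR) 0)
    rw [show (eulerFlux2D γ UL) 0 = UL 1 from rfl, show (eulerFlux2D γ UR) 0 = UR 1 from rfl]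
    have e0 : 2⁻¹ * (UL 0 + UR 0) + (2 * α)⁻¹ * (UL 1 - UR 1)
        = ((UL 0 + 1/α * UL 1) + (UR 0 + -1/α * UR 1))/2 := by ring
    rw [e0]
    linarith [KL.1, KR.1]
  · show 0 < eulerPressure2D γ _
    rw [eulerPressure2D]
    simp only [eulerFlux2D, eulerPressure2D, Pi.add_apply, Pi.smul_apply, Pi.sub_apply,
      smul_eq_mul, Matrix.cons_val_zero, Matrix.cons_val_one, Matrix.head_cons,
      Matrix.cons_val_two, Matrix.cons_val_three, Matrix.tail_cons]
    have e0 : 2⁻¹ * (UL 0 + UR 0) + (2 * α)⁻¹ * (UL 1 - UR 1)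
        = ((UL 0 + 1/α * UL 1) + (UR 0 + -1/α * UR 1))/2 := by ring
    have e1 : 2⁻¹ * (UL 1 + UR 1) + (2 * α)⁻¹ *
          (UL 1 ^ 2 / UL 0 + (γ - 1) * (UL 3 - (UL 1 ^ 2 + UL 2 ^ 2) / (2 * UL 0)) -
            (UR 1 ^ 2 / UR 0 + (γ - 1) * (UR 3 - (UR 1 ^ 2 + UR 2 ^ 2) / (2 * UR 0))))
        = ((UL 1 + 1/α * (UL 1^2/UL 0 + (γ-1)*(UL 3 - (UL 1^2+UL 2^2)/(2*UL 0))))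
           + (UR 1 + -1/α * (UR 1^2/UR 0 + (γ-1)*(UR 3 - (UR 1^2+UR 2^2)/(2*UR 0)))))/2 := by
      ring
    have e2 : 2⁻¹ * (UL 2 + UR 2) + (2 * α)⁻¹ * (UL 1 * UL 2 / UL 0 - UR 1 * UR 2 / UR 0)
        = ((UL 2 + 1/α * (UL 1*UL 2/UL 0)) + (UR 2 + -1/α * (UR 1*UR 2/UR 0)))/2 := by
      ring
    have e3 : 2⁻¹ * (UL 3 + UR 3) + (2 * α)⁻¹ *
          ((UL 3 + (γ - 1) * (UL 3 - (UL 1 ^ 2 + UL 2 ^ 2) / (2 * UL 0))) * UL 1 / UL 0 -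
            (UR 3 + (γ - 1) * (UR 3 - (UR 1 ^ 2 + UR 2 ^ 2) / (2 * UR 0))) * UR 1 / UR 0)
        = ((UL 3 + 1/α * ((UL 3 + (γ-1)*(UL 3 - (UL 1^2+UL 2^2)/(2*UL 0))) * UL 1 / UL 0))
           + (UR 3 + -1/α * ((UR 3 + (γ-1)*(UR 3 - (UR 1^2+UR 2^2)/(2*UR 0))) * UR 1 / UR 0)))/2 := by
      ring
    rw [e0, e1, e2, e3]
    have M := llf_mid _ _ _ _ _ _ _ _ KL.1 KR.1 KL.2 KR.2
    exact mul_pos (by linarith) M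
end

section
/- Fix γ > 1. Let U = (ρ, m₁, m₂, E) be a 2D Euler state in the admissible set G, and let α be a real number with α ≥ |v₁| + a, where v₁ = m₁/ρ and a = √(γp(U)/ρ). Then both vectors U + F₁(U)/α and U − F₁(U)/α belong to G, i.e. each has positive density and positive pressure. -/
/-! With `v = m₁/ρ` and `β = 1 + c v`, the shifted state `U + c F₁(U)` has density `ρβ` and
pressure `β p - (γ - 1) p² c² / (2ρβ)`. It is therefore admissible as soon as `β > 0` and
`γ p c² ≤ ρβ²` (as `γ - 1 < 2γ`), i.e. `a |c| ≤ 1 + c v`, which is what `|c| (|v| + a) ≤ 1`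
gives. Both shifts `c = ±1/α` satisfy it. -/

lemma abs_mul_le_one_add_mul {v a c : ℝ} (h : |c| * (|v| + a) ≤ 1) : a * |c| ≤ 1 + c * v := by
  have hcv : -(|c| * |v|) ≤ c * v := by simpa only [abs_mul] using neg_abs_le (c * v)
  linarith

lemma mul_sq_div_lt_of_mul_sq_le {γ ρ p β c : ℝ} (hρ : 0 < ρ) (hp : 0 < p) (hβ : 0 < β)
    (h : γ * p * c ^ 2 ≤ ρ * β ^ 2) : (γ - 1) * p ^ 2 * c ^ 2 / (2 * ρ * β) < β * p := by
  rw [div_lt_iff₀ (by positivity)]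
  nlinarith [mul_le_mul_of_nonneg_left h hp.le, mul_pos hp (mul_pos hρ (pow_pos hβ 2)),
    mul_nonneg (sq_nonneg p) (sq_nonneg c)]

section Shift

variable {γ : ℝ} {U : Fin 4 → ℝ}

lemma eulerSound2D_sq (hγ : 0 ≤ γ) (hU : U ∈ eulerAdm2D γ) :
    eulerSound2D γ U ^ 2 = γ * eulerPressure2D γ U / U 0 :=
  Real.sq_sqrt (div_nonneg (mul_nonneg hγ hU.2.le) hU.1.le)

lemma eulerSound2D_pos (hγ : 0 < γ) (hU : U ∈ eulerAdm2D γ) : 0 < eulerSound2D γ U :=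
  Real.sqrt_pos.mpr (div_pos (mul_pos hγ hU.2) hU.1)

lemma add_smul_eulerFlux2D_zero (hρ : U 0 ≠ 0) (c : ℝ) :
    (U + c • eulerFlux2D γ U) 0 = U 0 * (1 + c * (U 1 / U 0)) := by
  simp only [Pi.add_apply, Pi.smul_apply, smul_eq_mul, eulerFlux2D, Matrix.cons_val_zero]
  field_simp

lemma eulerPressure2D_add_smul_flux (hρ : U 0 ≠ 0) (c : ℝ) (hβ : 1 + c * (U 1 / U 0) ≠ 0) :
    eulerPressure2D γ (U + c • eulerFlux2D γ U) =
      (1 + c * (U 1 / U 0)) * eulerPressure2D γ U -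
        (γ - 1) * eulerPressure2D γ U ^ 2 * c ^ 2 / (2 * U 0 * (1 + c * (U 1 / U 0))) := by
  have hβ' : U 0 + c * U 1 ≠ 0 := by
    contrapose! hβ
    field_simp
    linarith
  simp only [eulerPressure2D, Pi.add_apply, Pi.smul_apply, smul_eq_mul, eulerFlux2D,
    Matrix.cons_val]
  field_simp
  ring

theorem add_smul_eulerFlux2D_mem_eulerAdm2D (hγ : 0 < γ) (hU : U ∈ eulerAdm2D γ) {c : ℝ}
    (hc : |c| * (|U 1 / U 0| + eulerSound2D γ U) ≤ 1) :
    U + c • eulerFlux2D γ U ∈ eulerAdm2D γ := by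
  obtain ⟨hρ, hp⟩ := hU
  have hβa : eulerSound2D γ U * |c| ≤ 1 + c * (U 1 / U 0) := abs_mul_le_one_add_mul hc
  have hβ : 0 < 1 + c * (U 1 / U 0) := by
    rcases eq_or_ne c 0 with rfl | hc0
    · simp
    · exact (mul_pos (eulerSound2D_pos hγ ⟨hρ, hp⟩) (abs_pos.mpr hc0)).trans_le hβa
  have hsound : γ * eulerPressure2D γ U * c ^ 2 ≤ U 0 * (1 + c * (U 1 / U 0)) ^ 2 := by
    have ha : 0 ≤ eulerSound2D γ U := Real.sqrt_nonneg _
    calc γ * eulerPressure2D γ U * c ^ 2 = U 0 * (eulerSound2D γ U * |c|) ^ 2 := by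
          rw [mul_pow, sq_abs, eulerSound2D_sq hγ.le ⟨hρ, hp⟩]; field_simp
      _ ≤ U 0 * (1 + c * (U 1 / U 0)) ^ 2 := by gcongr
  refine ⟨?_, ?_⟩
  · rw [add_smul_eulerFlux2D_zero hρ.ne']
    positivity
  · rw [eulerPressure2D_add_smul_flux hρ.ne' c hβ.ne', sub_pos]
    exact mul_sq_div_lt_of_mul_sq_le hρ hp hβ hsound

end Shift

theorem euler2D_shifted_states_admissible
    (γ : ℝ) (hγ : 1 < γ) (U : Fin 4 → ℝ) (hU : U ∈ eulerAdm2D γ) (α : ℝ)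
    (hα : |U 1 / U 0| + eulerSound2D γ U ≤ α) :
    U + α⁻¹ • eulerFlux2D γ U ∈ eulerAdm2D γ ∧
    U - α⁻¹ • eulerFlux2D γ U ∈ eulerAdm2D γ := by
  have hspeed : 0 ≤ |U 1 / U 0| + eulerSound2D γ U :=
    add_nonneg (abs_nonneg _) (Real.sqrt_nonneg _)
  have hshift : |α⁻¹| * (|U 1 / U 0| + eulerSound2D γ U) ≤ 1 := by
    rw [abs_of_nonneg (inv_nonneg.mpr (hspeed.trans hα))]
    exact inv_mul_le_one_of_le₀ hα (hspeed.trans hα)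
  have hγ0 : 0 < γ := zero_lt_one.trans hγ
  refine ⟨add_smul_eulerFlux2D_mem_eulerAdm2D hγ0 hU hshift, ?_⟩
  rw [sub_eq_add_neg, ← neg_smul]
  exact add_smul_eulerFlux2D_mem_eulerAdm2D hγ0 hU (by rwa [abs_neg])
end

section
/- Let m₀ ≤ M₀, let f : ℝ → ℝ be differentiable, and let α₋, α₊ > 0 satisfy |f'(u)| ≤ α₋ and |f'(u)| ≤ α₊ for every u ∈ [m₀, M₀]. Let ū₋, ū₀, ū₊ ∈ [m₀, M₀], let Δt, Δx > 0 with Δt(α₋ + α₊) ≤ Δx, and define the local Lax–Friedrichs fluxes F̂₊ = ½(f(ū₀) + f(ū₊)) − (α₊/2)(ū₊ − ū₀) and F̂₋ = ½(f(ū₋) + f(ū₀)) − (α₋/2)(ū₀ − ū₋). Then the updated average ūᴸ = ū₀ − (Δt/Δx)(F̂₊ − F̂₋) satisfies m₀ ≤ ūᴸ ≤ M₀. -/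
lemma mvt_icc (m M : ℝ) (f : ℝ → ℝ) (hf : Differentiable ℝ f) (a b : ℝ)
    (ha : a ∈ Set.Icc m M) (hb : b ∈ Set.Icc m M) :
    ∃ c ∈ Set.Icc m M, f b - f a = deriv f c * (b - a) := by
  rcases lt_trichotomy a b with h | h | h
  · obtain ⟨c, hc, hc'⟩ := exists_deriv_eq_slope f h (hf.continuous.continuousOn)
      (fun x _ => (hf x).differentiableWithinAt)
    refine ⟨c, ⟨le_trans ha.1 hc.1.le, le_trans hc.2.le hb.2⟩, ?_⟩
    rw [hc', div_mul_cancel₀ _ (sub_ne_zero.mpr (ne_of_gt h))]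
  · exact ⟨a, ha, by rw [h]; ring⟩
  · obtain ⟨c, hc, hc'⟩ := exists_deriv_eq_slope f h (hf.continuous.continuousOn)
      (fun x _ => (hf x).differentiableWithinAt)
    refine ⟨c, ⟨le_trans hb.1 hc.1.le, le_trans hc.2.le ha.2⟩, ?_⟩
    rw [hc']
    have hab : a - b ≠ 0 := sub_ne_zero.mpr (ne_of_gt h)
    field_simp
    ring

theorem llf_scheme_scalar_maximum_principle
    (m₀ M₀ : ℝ) (hmM : m₀ ≤ M₀) (f : ℝ → ℝ) (hf : Differentiable ℝ f)
    (αm αp : ℝ) (hαm : 0 < αm) (hαp : 0 < αp)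
    (hbm : ∀ u ∈ Set.Icc m₀ M₀, |deriv f u| ≤ αm)
    (hbp : ∀ u ∈ Set.Icc m₀ M₀, |deriv f u| ≤ αp)
    (um u₀ up : ℝ) (hum : um ∈ Set.Icc m₀ M₀) (hu₀ : u₀ ∈ Set.Icc m₀ M₀)
    (hup : up ∈ Set.Icc m₀ M₀)
    (Δt Δx : ℝ) (hΔt : 0 < Δt) (hΔx : 0 < Δx) (hCFL : Δt * (αm + αp) ≤ Δx) :
    u₀ - Δt / Δx * ((((f u₀ + f up) / 2 - αp / 2 * (up - u₀))) -
        (((f um + f u₀) / 2 - αm / 2 * (u₀ - um)))) ∈ Set.Icc m₀ M₀ := by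
  obtain ⟨ξp, hξp, hp⟩ := mvt_icc m₀ M₀ f hf u₀ up hu₀ hup
  obtain ⟨ξm, hξm, hm⟩ := mvt_icc m₀ M₀ f hf um u₀ hum hu₀
  have hdp := abs_le.mp (hbp ξp hξp)
  have hdm := abs_le.mp (hbm ξm hξm)
  set lam := Δt / Δx with hlam
  have hlam0 : 0 < lam := div_pos hΔt hΔx
  have hlam1 : lam * (αm + αp) ≤ 1 := by
    rw [hlam, div_mul_eq_mul_div, div_le_one hΔx]; exact hCFL
  have hfeq : f up - f u₀ = deriv f ξp * (up - u₀) := hp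
  have hfeq2 : f u₀ - f um = deriv f ξm * (u₀ - um) := hm
  have key : u₀ - lam * ((((f u₀ + f up) / 2 - αp / 2 * (up - u₀))) -
        (((f um + f u₀) / 2 - αm / 2 * (u₀ - um))))
      = u₀ * (1 - lam / 2 * (αp - deriv f ξp) - lam / 2 * (αm + deriv f ξm))
        + lam / 2 * (αp - deriv f ξp) * up + lam / 2 * (αm + deriv f ξm) * um := by
    have : f up = f u₀ + deriv f ξp * (up - u₀) := by linarith
    have h2 : f um = f u₀ - deriv f ξm * (u₀ - um) := by linarith
    rw [this, h2]; ring
  rw [key]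
  have cp0 : 0 ≤ lam / 2 * (αp - deriv f ξp) := by
    apply mul_nonneg (by linarith); linarith [hdp.2]
  have cm0 : 0 ≤ lam / 2 * (αm + deriv f ξm) := by
    apply mul_nonneg (by linarith); linarith [hdm.1]
  have csum : lam / 2 * (αp - deriv f ξp) + lam / 2 * (αm + deriv f ξm) ≤ 1 := by
    have h1 : αp - deriv f ξp ≤ 2 * αp := by linarith [hdp.1]
    have h2 : αm + deriv f ξm ≤ 2 * αm := by linarith [hdm.2]
    nlinarith
  constructor
  · nlinarith [hu₀.1, hup.1, hum.1]
  · nlinarith [hu₀.2, hup.2, hum.2]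
end

section
/- Let α > 0, let ũ ∈ ℝ, and let bounds m₁ ≤ ũ ≤ M₁ and m₂ ≤ ũ ≤ M₂ be given. For Δf ∈ ℝ define the limited anti-diffusive flux Δfᴸⁱᵐ = min{Δf, α(ũ − m₁), α(M₂ − ũ)} if Δf ≥ 0, and Δfᴸⁱᵐ = max{Δf, α(m₂ − ũ), α(ũ − M₁)} otherwise. Then m₁ ≤ ũ − Δfᴸⁱᵐ/α ≤ M₁ and m₂ ≤ ũ + Δfᴸⁱᵐ/α ≤ M₂. -/
theorem limited_antidiffusive_flux_bounds
    (α : ℝ) (hα : 0 < α) (u m₁ M₁ m₂ M₂ : ℝ)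
    (h₁ : m₁ ≤ u) (h₁' : u ≤ M₁) (h₂ : m₂ ≤ u) (h₂' : u ≤ M₂)
    (Δf : ℝ)
    (Δflim : ℝ)
    (hΔflim : Δflim = if 0 ≤ Δf then
        min Δf (min (α * (u - m₁)) (α * (M₂ - u)))
      else
        max Δf (max (α * (m₂ - u)) (α * (u - M₁)))) :
    (m₁ ≤ u - Δflim / α ∧ u - Δflim / α ≤ M₁) ∧
    (m₂ ≤ u + Δflim / α ∧ u + Δflim / α ≤ M₂) := by
  subst hΔflim
  split_ifs with h
  · set x := min Δf (min (α * (u - m₁)) (α * (M₂ - u))) with hx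
    have hle1 : x ≤ α * (u - m₁) := le_trans (min_le_right _ _) (min_le_left _ _)
    have hle2 : x ≤ α * (M₂ - u) := le_trans (min_le_right _ _) (min_le_right _ _)
    have h0 : 0 ≤ x := by
      rw [hx]
      simp only [le_min_iff]
      exact ⟨h, mul_nonneg hα.le (by linarith), mul_nonneg hα.le (by linarith)⟩
    have a0 : 0 ≤ x / α := div_nonneg h0 hα.le
    have a1 : x / α ≤ u - m₁ := by rw [div_le_iff₀ hα]; nlinarith
    have a2 : x / α ≤ M₂ - u := by rw [div_le_iff₀ hα]; nlinarith
    exact ⟨⟨by linarith, by linarith⟩, ⟨by linarith, by linarith⟩⟩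
  · set x := max Δf (max (α * (m₂ - u)) (α * (u - M₁))) with hx
    have hge1 : α * (m₂ - u) ≤ x := le_trans (le_max_left _ _) (le_max_right _ _)
    have hge2 : α * (u - M₁) ≤ x := le_trans (le_max_right _ _) (le_max_right _ _)
    have h0 : x ≤ 0 := by
      rw [hx]
      simp only [max_le_iff]
      exact ⟨le_of_not_ge h, mul_nonpos_of_nonneg_of_nonpos hα.le (by linarith),
        mul_nonpos_of_nonneg_of_nonpos hα.le (by linarith)⟩
    have a0 : x / α ≤ 0 := div_nonpos_of_nonpos_of_nonneg h0 hα.le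
    have a1 : m₂ - u ≤ x / α := by rw [le_div_iff₀ hα]; nlinarith
    have a2 : u - M₁ ≤ x / α := by rw [le_div_iff₀ hα]; nlinarith
    exact ⟨⟨by linarith, by linarith⟩, ⟨by linarith, by linarith⟩⟩
end

section
/- Let m ≤ M be real numbers, let uᴸ ∈ [m, M], and let uᴴ ∈ ℝ with uᴴ ≠ uᴸ. Define θ = min{1, |(uᴸ − m)/(uᴸ − uᴴ)|, |(M − uᴸ)/(uᴴ − uᴸ)|}. Then the limited value uᴸⁱᵐ = θ uᴴ + (1 − θ) uᴸ satisfies m ≤ uᴸⁱᵐ ≤ M. -/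
theorem scaling_limiter_maximum_principle
    (m M : ℝ) (hmM : m ≤ M) (uL : ℝ) (huL : uL ∈ Set.Icc m M)
    (uH : ℝ) (hne : uH ≠ uL)
    (θ : ℝ)
    (hθ : θ = min 1 (min |(uL - m) / (uL - uH)| |(M - uL) / (uH - uL)|)) :
    θ * uH + (1 - θ) * uL ∈ Set.Icc m M := by
  obtain ⟨h1, h2⟩ := huL
  have hθ0 : 0 ≤ θ := by
    rw [hθ]
    exact le_min zero_le_one (le_min (abs_nonneg _) (abs_nonneg _))
  have key : θ * uH + (1 - θ) * uL = uL + θ * (uH - uL) := by ring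
  rw [key]
  rcases lt_or_gt_of_ne hne with hlt | hgt
  · -- uH < uL
    have hd : 0 < uL - uH := by linarith
    have hθa : θ ≤ |(uL - m) / (uL - uH)| := le_trans (hθ ▸ min_le_right _ _) (min_le_left _ _)
    have habs : |(uL - m) / (uL - uH)| = (uL - m) / (uL - uH) := by
      rw [abs_of_nonneg (div_nonneg (by linarith) hd.le)]
    rw [habs] at hθa
    have hmul : θ * (uL - uH) ≤ uL - m := by
      have := mul_le_mul_of_nonneg_right hθa hd.le
      rwa [div_mul_cancel₀ _ hd.ne'] at this
    constructor
    · nlinarith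
    · nlinarith [mul_nonneg hθ0 hd.le]
  · -- uH > uL
    have hd : 0 < uH - uL := by linarith
    have hθa : θ ≤ |(M - uL) / (uH - uL)| := le_trans (hθ ▸ min_le_right _ _) (min_le_right _ _)
    have habs : |(M - uL) / (uH - uL)| = (M - uL) / (uH - uL) := by
      rw [abs_of_nonneg (div_nonneg (by linarith) hd.le)]
    rw [habs] at hθa
    have hmul : θ * (uH - uL) ≤ M - uL := by
      have := mul_le_mul_of_nonneg_right hθa hd.le
      rwa [div_mul_cancel₀ _ hd.ne'] at this
    constructor
    · nlinarith [mul_nonneg hθ0 hd.le]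
    · linarith
end

section
/- Fix γ > 1 and ε > 0. Let Uᴸ, U* ∈ ℝ⁴ be 2D Euler states with positive densities ρ(Uᴸ) > 0 and ρ(U*) > 0, and suppose p(Uᴸ) ≥ ε. Define θ = (p(Uᴸ) − ε)/(p(Uᴸ) − p(U*)) if p(U*) < ε, and θ = 1 otherwise. Then θ ∈ [0, 1] and the limited state Uᴸⁱᵐ = θ U* + (1 − θ) Uᴸ satisfies p(Uᴸⁱᵐ) ≥ ε. -/
private lemma kinetic_convex (a b rs rl m1s m2s m1l m2l : ℝ)
    (ha : 0 ≤ a) (hb : 0 ≤ b) (hrs : 0 < rs) (hrl : 0 < rl)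
    (hρ : 0 < a * rs + b * rl) :
    ((a * m1s + b * m1l) ^ 2 + (a * m2s + b * m2l) ^ 2) / (2 * (a * rs + b * rl)) ≤
      a * ((m1s ^ 2 + m2s ^ 2) / (2 * rs)) + b * ((m1l ^ 2 + m2l ^ 2) / (2 * rl)) := by
  have hR : a * ((m1s ^ 2 + m2s ^ 2) / (2 * rs)) + b * ((m1l ^ 2 + m2l ^ 2) / (2 * rl))
      = (a * (m1s ^ 2 + m2s ^ 2) * rl + b * (m1l ^ 2 + m2l ^ 2) * rs) / (2 * (rs * rl)) := by
    field_simp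
  rw [hR, div_le_div_iff₀ (by positivity) (by positivity)]
  nlinarith [mul_nonneg (mul_nonneg ha hb) (sq_nonneg (m1s * rl - m1l * rs)),
    mul_nonneg (mul_nonneg ha hb) (sq_nonneg (m2s * rl - m2l * rs)),
    mul_pos hrs hrl, sq_nonneg (m1s * rl - m1l * rs)]

theorem scaling_limiter_pressure_positivity
    (γ ε : ℝ) (hγ : 1 < γ) (hε : 0 < ε)
    (UL Ustar : Fin 4 → ℝ) (hρL : 0 < UL 0) (hρs : 0 < Ustar 0)
    (hpL : ε ≤ eulerPressure2D γ UL)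
    (θ : ℝ)
    (hθ : θ = if eulerPressure2D γ Ustar < ε then
        (eulerPressure2D γ UL - ε) / (eulerPressure2D γ UL - eulerPressure2D γ Ustar)
      else 1) :
    θ ∈ Set.Icc (0 : ℝ) 1 ∧ ε ≤ eulerPressure2D γ (θ • Ustar + (1 - θ) • UL) := by
  set pS := eulerPressure2D γ Ustar with hpSdef
  set pL := eulerPressure2D γ UL with hpLdef
  -- θ ∈ [0,1] and ε ≤ θ pS + (1-θ) pL
  have hθ01 : 0 ≤ θ ∧ θ ≤ 1 ∧ ε ≤ θ * pS + (1 - θ) * pL := by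
    by_cases h : pS < ε
    · rw [if_pos h] at hθ
      have hd : 0 < pL - pS := by linarith
      have h0 : 0 ≤ θ := by
        rw [hθ]; exact div_nonneg (by linarith) hd.le
      have h1 : θ ≤ 1 := by
        rw [hθ, div_le_one hd]; linarith
      have hmul : θ * (pL - pS) = pL - ε := by
        rw [hθ]; field_simp
      refine ⟨h0, h1, ?_⟩
      nlinarith [hmul]
    · rw [if_neg h] at hθ
      subst hθ
      push_neg at h
      exact ⟨zero_le_one, le_refl 1, by linarith⟩
  obtain ⟨h0, h1, hcomb⟩ := hθ01
  refine ⟨⟨h0, h1⟩, ?_⟩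
  -- concavity of the pressure
  have hb : 0 ≤ 1 - θ := by linarith
  have hρ : 0 < θ * Ustar 0 + (1 - θ) * UL 0 := by
    rcases eq_or_lt_of_le h0 with h0' | h0'
    · rw [← h0']; simpa using hρL
    · have : 0 < θ * Ustar 0 := mul_pos h0' hρs
      nlinarith [mul_nonneg hb hρL.le]
  have hk := kinetic_convex θ (1 - θ) (Ustar 0) (UL 0) (Ustar 1) (Ustar 2) (UL 1) (UL 2)
    h0 hb hρs hρL hρ
  have hγ' : (0 : ℝ) < γ - 1 := by linarith
  have hconc : θ * pS + (1 - θ) * pL ≤ eulerPressure2D γ (θ • Ustar + (1 - θ) • UL) := by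
    simp only [hpSdef, hpLdef, eulerPressure2D, Pi.add_apply, Pi.smul_apply, smul_eq_mul]
    nlinarith [mul_le_mul_of_nonneg_left hk hγ'.le]
  linarith
end

section
/- Let m₀ ≤ M₀, let f₁, f₂ : ℝ → ℝ be differentiable, and let α₁⁻, α₁⁺, α₂⁻, α₂⁺ > 0 satisfy |f₁'(u)| ≤ α₁⁻, |f₁'(u)| ≤ α₁⁺, |f₂'(u)| ≤ α₂⁻ and |f₂'(u)| ≤ α₂⁺ for every u ∈ [m₀, M₀]. Let ū₀ and its four neighbors ū_W, ū_E, ū_S, ū_N all lie in [m₀, M₀], let Δt, Δx, Δy > 0 satisfy Δt ≤ ½ min{Δx/(α₁⁻ + α₁⁺), Δy/(α₂⁻ + α₂⁺)}, and define the local Lax–Friedrichs fluxes F̂₁⁺ = ½(f₁(ū₀) + f₁(ū_E)) − (α₁⁺/2)(ū_E − ū₀), F̂₁⁻ = ½(f₁(ū_W) + f₁(ū₀)) − (α₁⁻/2)(ū₀ − ū_W), F̂₂⁺ = ½(f₂(ū₀) + f₂(ū_N)) − (α₂⁺/2)(ū_N − ū₀), F̂₂⁻ = ½(f₂(ū_S)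 + f₂(ū₀)) − (α₂⁻/2)(ū₀ − ū_S). Then the updated average ūᴸ = ū₀ − (Δt/Δx)(F̂₁⁺ − F̂₁⁻) − (Δt/Δy)(F̂₂⁺ − F̂₂⁻) satisfies m₀ ≤ ūᴸ ≤ M₀. -/
private lemma lip_bound (f : ℝ → ℝ) (hf : Differentiable ℝ f) (m M α : ℝ)
    (hb : ∀ u ∈ Set.Icc m M, |deriv f u| ≤ α)
    (a b : ℝ) (ha : a ∈ Set.Icc m M) (hb' : b ∈ Set.Icc m M) (hab : a ≤ b) :
    |f b - f a| ≤ α * (b - a) := by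
  rcases eq_or_lt_of_le hab with rfl | hlt
  · simp
  · obtain ⟨c, hc, hderiv⟩ := exists_hasDerivAt_eq_slope f (deriv f) hlt
      (hf.continuous.continuousOn) (fun x _ => (hf x).hasDerivAt)
    have hcI : c ∈ Set.Icc m M := ⟨le_trans ha.1 hc.1.le, le_trans hc.2.le hb'.2⟩
    have h := hb c hcI
    rw [hderiv] at h
    rw [abs_div] at h
    have hba : 0 < b - a := sub_pos.mpr hlt
    rw [abs_of_pos hba, div_le_iff₀ hba] at h
    linarith [h]

theorem llf_scheme_2d_scalar_maximum_principle
    (m₀ M₀ : ℝ) (hmM : m₀ ≤ M₀) (f₁ f₂ : ℝ → ℝ)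
    (hf₁ : Differentiable ℝ f₁) (hf₂ : Differentiable ℝ f₂)
    (α₁m α₁p α₂m α₂p : ℝ)
    (hα₁m : 0 < α₁m) (hα₁p : 0 < α₁p) (hα₂m : 0 < α₂m) (hα₂p : 0 < α₂p)
    (hb₁m : ∀ u ∈ Set.Icc m₀ M₀, |deriv f₁ u| ≤ α₁m)
    (hb₁p : ∀ u ∈ Set.Icc m₀ M₀, |deriv f₁ u| ≤ α₁p)
    (hb₂m : ∀ u ∈ Set.Icc m₀ M₀, |deriv f₂ u| ≤ α₂m)
    (hb₂p : ∀ u ∈ Set.Icc m₀ M₀, |deriv f₂ u| ≤ α₂p)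
    (u₀ uW uE uS uN : ℝ)
    (hu₀ : u₀ ∈ Set.Icc m₀ M₀) (huW : uW ∈ Set.Icc m₀ M₀)
    (huE : uE ∈ Set.Icc m₀ M₀) (huS : uS ∈ Set.Icc m₀ M₀)
    (huN : uN ∈ Set.Icc m₀ M₀)
    (Δt Δx Δy : ℝ) (hΔt : 0 < Δt) (hΔx : 0 < Δx) (hΔy : 0 < Δy)
    (hCFL : Δt ≤ 2⁻¹ * min (Δx / (α₁m + α₁p)) (Δy / (α₂m + α₂p))) :
    u₀ - Δt / Δx * (((f₁ u₀ + f₁ uE) / 2 - α₁p / 2 * (uE - u₀)) -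
          ((f₁ uW + f₁ u₀) / 2 - α₁m / 2 * (u₀ - uW)))
       - Δt / Δy * (((f₂ u₀ + f₂ uN) / 2 - α₂p / 2 * (uN - u₀)) -
          ((f₂ uS + f₂ u₀) / 2 - α₂m / 2 * (u₀ - uS))) ∈ Set.Icc m₀ M₀ := by
  set P := Δt / Δx with hP
  set Q := Δt / Δy with hQ
  have hP0 : 0 < P := div_pos hΔt hΔx
  have hQ0 : 0 < Q := div_pos hΔt hΔy
  have hs₁ : 0 < α₁m + α₁p := by linarith
  have hs₂ : 0 < α₂m + α₂p := by linarith
  -- CFL consequences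
  have hC1 : P * (α₁m + α₁p) ≤ 1 / 2 := by
    have h1 : Δt ≤ 2⁻¹ * (Δx / (α₁m + α₁p)) :=
      le_trans hCFL (by gcongr; exact min_le_left _ _)
    have h2 := mul_le_mul_of_nonneg_right h1 hs₁.le
    rw [mul_assoc, div_mul_cancel₀ _ hs₁.ne'] at h2
    rw [hP, div_mul_eq_mul_div, div_le_iff₀ hΔx]
    linarith
  have hC2 : Q * (α₂m + α₂p) ≤ 1 / 2 := by
    have h1 : Δt ≤ 2⁻¹ * (Δy / (α₂m + α₂p)) :=
      le_trans hCFL (by gcongr; exact min_le_right _ _)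
    have h2 := mul_le_mul_of_nonneg_right h1 hs₂.le
    rw [mul_assoc, div_mul_cancel₀ _ hs₂.ne'] at h2
    rw [hQ, div_mul_eq_mul_div, div_le_iff₀ hΔy]
    linarith
  have hc₀ : 0 ≤ 1 - P * (α₁p + α₁m) / 2 - Q * (α₂p + α₂m) / 2 := by linarith
  have hmem : m₀ ∈ Set.Icc m₀ M₀ := ⟨le_refl _, hmM⟩
  have hMem : M₀ ∈ Set.Icc m₀ M₀ := ⟨hmM, le_refl _⟩
  -- monotonicity bounds via Lipschitz estimates
  have bE1 := abs_le.mp (lip_bound f₁ hf₁ m₀ M₀ α₁p hb₁p m₀ uE hmem huE huE.1)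
  have bE2 := abs_le.mp (lip_bound f₁ hf₁ m₀ M₀ α₁p hb₁p uE M₀ huE hMem huE.2)
  have bW1 := abs_le.mp (lip_bound f₁ hf₁ m₀ M₀ α₁m hb₁m m₀ uW hmem huW huW.1)
  have bW2 := abs_le.mp (lip_bound f₁ hf₁ m₀ M₀ α₁m hb₁m uW M₀ huW hMem huW.2)
  have bN1 := abs_le.mp (lip_bound f₂ hf₂ m₀ M₀ α₂p hb₂p m₀ uN hmem huN huN.1)
  have bN2 := abs_le.mp (lip_bound f₂ hf₂ m₀ M₀ α₂p hb₂p uN M₀ huN hMem huN.2)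
  have bS1 := abs_le.mp (lip_bound f₂ hf₂ m₀ M₀ α₂m hb₂m m₀ uS hmem huS huS.1)
  have bS2 := abs_le.mp (lip_bound f₂ hf₂ m₀ M₀ α₂m hb₂m uS M₀ huS hMem huS.2)
  -- g-monotonicity facts
  have gEl : α₁p * m₀ - f₁ m₀ ≤ α₁p * uE - f₁ uE := by cases bE1; linarith
  have gEu : α₁p * uE - f₁ uE ≤ α₁p * M₀ - f₁ M₀ := by cases bE2; linarith
  have gWl : α₁m * m₀ + f₁ m₀ ≤ α₁m * uW + f₁ uW := by cases bW1; linarith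
  have gWu : α₁m * uW + f₁ uW ≤ α₁m * M₀ + f₁ M₀ := by cases bW2; linarith
  have gNl : α₂p * m₀ - f₂ m₀ ≤ α₂p * uN - f₂ uN := by cases bN1; linarith
  have gNu : α₂p * uN - f₂ uN ≤ α₂p * M₀ - f₂ M₀ := by cases bN2; linarith
  have gSl : α₂m * m₀ + f₂ m₀ ≤ α₂m * uS + f₂ uS := by cases bS1; linarith
  have gSu : α₂m * uS + f₂ uS ≤ α₂m * M₀ + f₂ M₀ := by cases bS2; linarith
  have key : u₀ - P * (((f₁ u₀ + f₁ uE) / 2 - α₁p / 2 * (uE - u₀)) -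
          ((f₁ uW + f₁ u₀) / 2 - α₁m / 2 * (u₀ - uW)))
       - Q * (((f₂ u₀ + f₂ uN) / 2 - α₂p / 2 * (uN - u₀)) -
          ((f₂ uS + f₂ u₀) / 2 - α₂m / 2 * (u₀ - uS)))
      = (1 - P * (α₁p + α₁m) / 2 - Q * (α₂p + α₂m) / 2) * u₀
        + (P / 2) * (α₁p * uE - f₁ uE) + (P / 2) * (α₁m * uW + f₁ uW)
        + (Q / 2) * (α₂p * uN - f₂ uN) + (Q / 2) * (α₂m * uS + f₂ uS) := by
    ring
  rw [key]
  constructor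
  · have : m₀ = (1 - P * (α₁p + α₁m) / 2 - Q * (α₂p + α₂m) / 2) * m₀
        + (P / 2) * (α₁p * m₀ - f₁ m₀) + (P / 2) * (α₁m * m₀ + f₁ m₀)
        + (Q / 2) * (α₂p * m₀ - f₂ m₀) + (Q / 2) * (α₂m * m₀ + f₂ m₀) := by ring
    rw [this]
    gcongr
    exact hu₀.1
  · have : M₀ = (1 - P * (α₁p + α₁m) / 2 - Q * (α₂p + α₂m) / 2) * M₀
        + (P / 2) * (α₁p * M₀ - f₁ M₀) + (P / 2) * (α₁m * M₀ + f₁ M₀)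
        + (Q / 2) * (α₂p * M₀ - f₂ M₀) + (Q / 2) * (α₂m * M₀ + f₂ M₀) := by ring
    rw [this]
    gcongr
    exact hu₀.2
end
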